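/- arXiv:2604.01488 — 2 statements merged into one kernel-verified Lean document; each statement's English description precedes it below -/
import Mathlib

section
/- Let k ≥ 3 and b ∈ ℕ. Then C_{k+b}^{(k)}(y) = y^k · H_{k−1}(y) · C_b^{(k)}(y) as formal power series over ℚ, where k+b and b are regarded as one-letter words. -/
/-- Image of a single letter `m = k*i + j` under the k-Bonacci morphism `φ_k` over ℕ:
`φ_k(ki+j) = (ki)(ki+j+1)` for `0 ≤ j ≤ k-2`, and `φ_k(ki+(k-1)) = ki+k`. -/
def phiLetter (k m : ℕ) : List ℕ :=
  if m % k = k - 1 then [m + 1] else [k * (m / k), m + 1]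

/-- The morphism `φ_k`, extended to words by concatenation. -/
def phi (k : ℕ) (w : List ℕ) : List ℕ := (w.map (phiLetter k)).flatten

/-- `W k n = φ_k^n(0)`, the n-th iterate of `φ_k` applied to the one-letter word `0`. -/
def W (k n : ℕ) : List ℕ := (phi k)^[n] [0]

/-- `shift n w = n ⊕ w`, adding `n` to every letter. -/
def shift (n : ℕ) (w : List ℕ) : List ℕ := w.map (· + n)

/-- `occ B w = |w|_B`, the number of (possibly overlapping) occurrences of `B`
as a factor of `w`, i.e. the number of positions `i` at which `B` is a prefix
of the suffix of `w` starting at `i`. -/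
def occ (B w : List ℕ) : ℕ :=
  ((List.range (w.length + 1)).filter (fun i => decide (B <+: w.drop i))).length

/-- `C k B = C_B^{(k)}(y) = Σ_{n≥0} |W_n^{(k)}|_B yⁿ` as a formal power series over ℚ. -/
noncomputable def C (k : ℕ) (B : List ℕ) : PowerSeries ℚ :=
  PowerSeries.mk (fun n => (occ B (W k n) : ℚ))

/-- `Hgf r = H_r(y)`, the multiplicative inverse of `1 - y - y² - ⋯ - y^r`. -/
noncomputable def Hgf (r : ℕ) : PowerSeries ℚ :=
  (1 - ∑ j ∈ Finset.Icc 1 r, (PowerSeries.X : PowerSeries ℚ) ^ j)⁻¹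

/-- `Ggf r = G_r(y) = (1 - y^r)·H_r(y) - 1`. -/
noncomputable def Ggf (r : ℕ) : PowerSeries ℚ :=
  (1 - (PowerSeries.X : PowerSeries ℚ) ^ r) * Hgf r - 1

/-- The set `B^{(k)} = B_1^{(k)} ∪ B_2^{(k)} ∪ B_3^{(k)}` of length-2 words. -/
def Bset (k : ℕ) : Set (List ℕ) :=
  {U | (∃ i a : ℕ, 1 ≤ a ∧ U = [a + k * i, k + k * i]) ∨
       (∃ i b : ℕ, 1 ≤ b ∧ b ≤ k - 1 ∧ U = [k * i, b + k * i]) ∨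
       (∃ a : ℕ, 1 ≤ a ∧ U = [a, 0])}

/-- The list of blocks in the decomposition of `W_n^{(k)}` for `n ≥ k`:
`W_{n-1}, …, W_{n-k+1}, k ⊕ W_{n-k}`. -/
def blocks (k n : ℕ) : List (List ℕ) :=
  (List.range (k - 1)).map (fun j => W k (n - 1 - j)) ++ [shift k (W k (n - k))]


section Aux
open List

lemma occ_singleton (a : ℕ) (w : List ℕ) : occ [a] w = w.count a := by
  induction w with
  | nil => simp [occ]
  | cons x w ih =>
    have hfil : (List.range (w.length + 1)).filter
        ((fun i => decide ([a] <+: (x :: w).drop i)) ∘ Nat.succ) =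
        (List.range (w.length + 1)).filter (fun i => decide ([a] <+: w.drop i)) := by
      apply List.filter_congr; intro i _; rfl
    rw [occ, List.length_cons, List.range_succ_eq_map, List.filter_cons, List.filter_map, hfil]
    by_cases hax : a = x
    · subst hax
      rw [if_pos (by simp [List.cons_prefix_cons])]
      rw [List.length_cons, List.length_map]
      have h2 : ((List.range (w.length + 1)).filter
          (fun i => decide ([a] <+: w.drop i))).length = w.count a := ih
      rw [h2, List.count_cons]
      simp
    · rw [if_neg (by simp [List.cons_prefix_cons, hax])]
      rw [List.length_map]
      have h2 : ((List.range (w.length + 1)).filter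
          (fun i => decide ([a] <+: w.drop i))).length = w.count a := ih
      rw [h2, List.count_cons]
      simp [Ne.symm hax]

lemma phi_append (k : ℕ) (u v : List ℕ) : phi k (u ++ v) = phi k u ++ phi k v := by
  simp [phi]

lemma phi_flatten_map {α : Type*} (k : ℕ) (f : α → List ℕ) (l : List α) :
    phi k (List.flatten (l.map f)) = List.flatten (l.map (fun a => phi k (f a))) := by
  induction l with
  | nil => simp [phi]
  | cons x l ih => simp [phi_append, ih]

lemma phiLetter_shift {k : ℕ} (hk : 0 < k) (m : ℕ) :
    phiLetter k (m + k) = (phiLetter k m).map (· + k) := by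
  unfold phiLetter
  rw [Nat.add_mod_right, Nat.add_div_right _ hk]
  by_cases h : m % k = k - 1 <;>
    simp [h, Nat.mul_add, Nat.mul_one] <;> omega

lemma phi_shift {k : ℕ} (hk : 0 < k) (w : List ℕ) :
    phi k (shift k w) = shift k (phi k w) := by
  induction w with
  | nil => simp [phi, shift]
  | cons x w ih =>
    simp only [shift, phi, List.map_cons, List.flatten_cons] at *
    rw [phiLetter_shift hk, ih, List.map_append]

lemma W_zero (k : ℕ) : W k 0 = [0] := rfl

lemma W_succ (k n : ℕ) : W k (n + 1) = phi k (W k n) := by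
  unfold W; rw [Function.iterate_succ_apply']

lemma mem_W_le {k n a : ℕ} (h : a ∈ W k n) : a ≤ n := by
  induction n generalizing a with
  | zero => simp [W_zero] at h; omega
  | succ n ih =>
    rw [W_succ, phi] at h
    rw [List.mem_flatten] at h
    obtain ⟨l, hl, hal⟩ := h
    rw [List.mem_map] at hl
    obtain ⟨m, hm, rfl⟩ := hl
    have hmn := ih hm
    by_cases hc : m % k = k - 1
    · simp [phiLetter, hc] at hal
      omega
    · simp [phiLetter, hc] at hal
      have h2 := Nat.div_mul_le_self m k
      have h3 : k * (m / k) = m / k * k := Nat.mul_comm _ _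
      rcases hal with h1 | h1 <;> omega

/-- `Wcat k n = W_{n-1} ++ ⋯ ++ W_0`. -/
def Wcat (k n : ℕ) : List ℕ :=
  ((List.range n).map (fun j => W k (n - 1 - j))).flatten

lemma Wcat_succ (k n : ℕ) : Wcat k (n + 1) = W k n ++ Wcat k n := by
  unfold Wcat
  rw [List.range_succ_eq_map, List.map_cons, List.flatten_cons, List.map_map]
  simp only [Nat.add_sub_cancel, Nat.sub_zero]
  congr 1
  congr 1
  apply List.map_congr_left
  intro j _
  simp only [Function.comp, Nat.succ_eq_add_one]
  congr 1
  omega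

lemma phi_Wcat (k n : ℕ) : phi k (Wcat k n) ++ [0] = Wcat k (n + 1) := by
  induction n with
  | zero => simp [Wcat, phi, W_zero]
  | succ n ih =>
    rw [Wcat_succ, phi_append, List.append_assoc, ih, ← W_succ, ← Wcat_succ]

lemma phiLetter_small {k n : ℕ} (hn : n < k - 1) : phiLetter k n = [0, n + 1] := by
  unfold phiLetter
  rw [Nat.mod_eq_of_lt (by omega)]
  rw [if_neg (by omega), Nat.div_eq_of_lt (by omega)]
  simp

lemma lemA {k : ℕ} (hk : 0 < k) : ∀ n, n ≤ k - 1 → W k n = Wcat k n ++ [n] := by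
  intro n
  induction n with
  | zero => intro _; simp [W_zero, Wcat]
  | succ n ih =>
    intro hn
    have h1 : W k n = Wcat k n ++ [n] := ih (by omega)
    rw [W_succ, h1, phi_append]
    have h2 : phi k [n] = [0, n + 1] := by
      simp [phi, phiLetter_small (show n < k - 1 by omega)]
    rw [h2]
    have h3 : ([0, n+1] : List ℕ) = [0] ++ [n+1] := rfl
    rw [h3, ← List.append_assoc, phi_Wcat]

/-- `Dcat k n = W_{n-1} ++ ⋯ ++ W_{n-k+1}` (k-1 blocks). -/
def Dcat (k n : ℕ) : List ℕ :=
  ((List.range (k - 1)).map (fun j => W k (n - 1 - j))).flatten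

lemma phi_Dcat {k n : ℕ} (hn : k - 1 ≤ n) : phi k (Dcat k n) = Dcat k (n + 1) := by
  unfold Dcat
  rw [phi_flatten_map]
  congr 1
  apply List.map_congr_left
  intro j hj
  rw [List.mem_range] at hj
  rw [← W_succ]
  congr 1
  omega

lemma lemB {k : ℕ} (hk : 3 ≤ k) :
    ∀ m, W k (m + k) = Dcat k (m + k) ++ shift k (W k m) := by
  intro m
  induction m with
  | zero =>
    have hkk : k - 1 + 1 = k := by omega
    have h1 : W k (k - 1) = Wcat k (k - 1) ++ [k - 1] := lemA (by omega) (k - 1) le_rfl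
    have h2 : W k k = phi k (W k (k - 1)) := by
      rw [← W_succ, hkk]
    rw [Nat.zero_add, h2, h1, phi_append]
    have h3 : phi k [k - 1] = [k] := by
      have hm : (k - 1) % k = k - 1 := Nat.mod_eq_of_lt (by omega)
      simp [phi, phiLetter, hm, hkk]
    have h4 : phi k (Wcat k (k - 1)) = Dcat k k := by
      unfold Wcat Dcat
      rw [phi_flatten_map]
      congr 1
      apply List.map_congr_left
      intro j hj
      rw [List.mem_range] at hj
      rw [← W_succ]
      congr 1
      omega
    rw [h3, h4]
    simp [shift, W_zero]
  | succ m ih =>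
    have h5 : m + 1 + k = (m + k) + 1 := by omega
    rw [h5, W_succ, ih, phi_append, phi_Dcat (by omega), phi_shift (by omega), ← W_succ]

lemma list_sum_range (n : ℕ) (f : ℕ → ℕ) :
    ((List.range n).map f).sum = ∑ i ∈ Finset.range n, f i := by
  induction n with
  | zero => simp
  | succ n ih =>
    rw [List.range_succ, Finset.sum_range_succ, List.map_append, List.sum_append, ih]
    simp

lemma count_shift (k a : ℕ) (w : List ℕ) : (shift k w).count (a + k) = w.count a := by
  unfold shift
  exact List.count_map_of_injective w (· + k) (fun x y h => by simpa using h) a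

lemma count_W_big_zero {k n a : ℕ} (hn : n < k) (ha : k ≤ a) : (W k n).count a = 0 := by
  rw [List.count_eq_zero]
  intro h
  have := mem_W_le h
  omega

lemma count_rec {k : ℕ} (hk : 3 ≤ k) (b m : ℕ) :
    (W k (m + k)).count (k + b)
      = (∑ j ∈ Finset.range (k - 1), (W k (m + k - 1 - j)).count (k + b))
        + (W k m).count b := by
  rw [lemB hk m, List.count_append]
  have h1 : (Dcat k (m + k)).count (k + b)
      = ∑ j ∈ Finset.range (k - 1), (W k (m + k - 1 - j)).count (k + b) := by
    unfold Dcat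
    rw [List.count_flatten, List.map_map]
    exact list_sum_range _ _
  have h2 : (shift k (W k m)).count (k + b) = (W k m).count b := by
    rw [Nat.add_comm k b]
    exact count_shift k b (W k m)
  rw [h1, h2]

end Aux

lemma sum_Icc_one {M : Type*} [AddCommMonoid M] (r : ℕ) (f : ℕ → M) :
    ∑ j ∈ Finset.Icc 1 r, f j = ∑ i ∈ Finset.range r, f (i + 1) := by
  induction r with
  | zero => simp
  | succ r ih => rw [Finset.sum_Icc_succ_top (by omega), ih, Finset.sum_range_succ]

theorem stmt4 (k b : ℕ) (hk : 3 ≤ k) :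
    C k [k + b] = PowerSeries.X ^ k * Hgf (k - 1) * C k [b] := by
  classical
  set S : PowerSeries ℚ := ∑ j ∈ Finset.Icc 1 (k-1), (PowerSeries.X : PowerSeries ℚ) ^ j
    with hS
  have hHgf : Hgf (k-1) = (1 - S)⁻¹ := rfl
  have hc0 : PowerSeries.constantCoeff (1 - S) = 1 := by
    rw [map_sub, map_one, hS, map_sum]
    rw [Finset.sum_eq_zero, sub_zero]
    intro j hj
    rw [Finset.mem_Icc] at hj
    rw [map_pow, PowerSeries.constantCoeff_X, zero_pow (by omega)]
  have hunit : (1 - S) * Hgf (k-1) = 1 := by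
    rw [hHgf]
    exact PowerSeries.mul_inv_cancel _ (by rw [hc0]; norm_num)
  have coeffC : ∀ (B : List ℕ) (n : ℕ),
      PowerSeries.coeff n (C k B) = (occ B (W k n) : ℚ) := fun B n =>
    PowerSeries.coeff_mk n _
  have key : (1 - S) * C k [k + b] = PowerSeries.X ^ k * C k [b] := by
    ext n
    rw [mul_comm (PowerSeries.X ^ k) (C k [b]), PowerSeries.coeff_mul_X_pow']
    rw [sub_mul, one_mul, map_sub, hS, Finset.sum_mul, map_sum]
    have hterm : ∀ j ∈ Finset.Icc 1 (k-1),
        PowerSeries.coeff n ((PowerSeries.X : PowerSeries ℚ) ^ j * C k [k+b])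
          = if j ≤ n then ((W k (n-j)).count (k+b) : ℚ) else 0 := by
      intro j hj
      rw [mul_comm, PowerSeries.coeff_mul_X_pow']
      split
      · rw [coeffC, occ_singleton]
      · rfl
    rw [Finset.sum_congr rfl hterm, coeffC, occ_singleton]
    by_cases hkn : k ≤ n
    · rw [if_pos hkn, coeffC, occ_singleton]
      have hn1 : (∑ j ∈ Finset.Icc 1 (k-1),
            if j ≤ n then ((W k (n-j)).count (k+b) : ℚ) else 0)
          = ∑ i ∈ Finset.range (k-1), ((W k (n-1-i)).count (k+b) : ℚ) := by
        rw [sum_Icc_one]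
        apply Finset.sum_congr rfl
        intro i hi
        rw [Finset.mem_range] at hi
        rw [if_pos (by omega), show n - (i + 1) = n - 1 - i from by omega]
      rw [hn1]
      have hcr := count_rec hk b (n - k)
      rw [show n - k + k = n from by omega] at hcr
      rw [hcr]
      push_cast
      ring
    · rw [if_neg hkn]
      rw [count_W_big_zero (by omega) (by omega)]
      have hsum : (∑ j ∈ Finset.Icc 1 (k-1),
          if j ≤ n then ((W k (n-j)).count (k+b) : ℚ) else 0) = 0 := by
        apply Finset.sum_eq_zero
        intro j hj
        rw [Finset.mem_Icc] at hj
        split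
        · rw [count_W_big_zero (by omega) (by omega)]
          simp
        · rfl
      rw [hsum]
      simp
  have hunit' : Hgf (k-1) * (1 - S) = 1 := by rw [mul_comm]; exact hunit
  calc C k [k + b] = (Hgf (k-1) * (1 - S)) * C k [k+b] := by rw [hunit', one_mul]
    _ = Hgf (k-1) * ((1 - S) * C k [k+b]) := by ring
    _ = Hgf (k-1) * (PowerSeries.X ^ k * C k [b]) := by rw [key]
    _ = PowerSeries.X ^ k * Hgf (k-1) * C k [b] := by ring
end

section
/- Let k ≥ 2, i ∈ ℕ, and 1 ≤ b ≤ k−1. Then for every n ∈ ℕ, the number of occurrences of the two-letter word (ki . b+ki) in W_n^{(k)} equals the number of occurrences of the single letter b+ki in W_n^{(k)}: c^{(k)}((ki . b+ki); n) = c^{(k)}(b+ki; n). -/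
lemma occ_nil (B : List ℕ) (hB : B ≠ []) : occ B [] = 0 := by
  simp [occ, hB]

lemma occ_cons (B : List ℕ) (a : ℕ) (l : List ℕ) :
    occ B (a :: l) = (if B <+: (a :: l) then 1 else 0) + occ B l := by
  unfold occ
  rw [List.length_cons, List.range_succ_eq_map, List.filter_cons]
  simp only [List.drop_zero, List.filter_map, List.length_map, List.drop_succ_cons,
    Function.comp_def]
  split <;> simp_all
  omega

lemma phi_cons (k m : ℕ) (t : List ℕ) :
    phi k (m :: t) = phiLetter k m ++ phi k t := by
  simp [phi]

lemma head_phi_mod (k : ℕ) (hk : 2 ≤ k) (w : List ℕ) :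
    ∀ z ∈ (phi k w).head?, z % k = 0 := by
  intro z hz
  cases w with
  | nil => simp [phi] at hz
  | cons m t =>
    rw [phi_cons] at hz
    unfold phiLetter at hz
    split at hz
    · next h =>
      simp at hz
      have hd := Nat.div_add_mod m k
      have hz' : z = k * (m / k) + k := by omega
      have hz2 : z = k * (m / k + 1) := by rw [Nat.mul_add, Nat.mul_one]; exact hz'
      rw [hz2, Nat.mul_mod_right]
    · simp at hz
      have hz' : z = k * (m / k) := by omega
      rw [hz', Nat.mul_mod_right]

lemma count_aux (x y : ℕ) (w : List ℕ)
    (h : List.Chain' (fun a c => c = y → a = x) w) :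
    occ [x, y] w + (if w.head? = some y then 1 else 0) = w.count y := by
  induction w with
  | nil => simp [occ_nil]
  | cons a l ih =>
    cases l with
    | nil =>
      have hp : ¬ ([x, y] <+: [a]) := by
        intro hp
        have := hp.length_le
        simp at this
      simp only [occ_cons, occ_nil [x, y] (by simp), hp, if_neg, if_false,
        List.count_cons, List.count_nil, List.head?_cons, Option.some.injEq]
      by_cases hay : a = y
      · simp [hay]
      · simp [hay, fun h' : y = a => hay h'.symm]
    | cons c t =>
      unfold List.Chain' at h
      rw [List.isChain_cons_cons] at h
      have hc := ih h.2
      rw [occ_cons, List.count_cons]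
      simp only [List.head?_cons, Option.some.injEq] at hc ⊢
      have hpre : ([x, y] <+: a :: c :: t) ↔ (x = a ∧ y = c) := by
        constructor
        · intro hp
          rw [List.cons_prefix_cons] at hp
          obtain ⟨h1, hp⟩ := hp
          rw [List.cons_prefix_cons] at hp
          exact ⟨h1, hp.1⟩
        · rintro ⟨rfl, rfl⟩
          exact ⟨t, rfl⟩
      by_cases hcy : c = y
      · have h1 : ([x, y] <+: a :: c :: t) := hpre.mpr ⟨(h.1 hcy).symm, hcy.symm⟩
        rw [if_pos h1]
        rw [if_pos hcy] at hc
        by_cases hay : a = y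
        · simp only [hay, if_pos, beq_self_eq_true, if_true]; omega
        · simp only [hay, if_neg, if_false, beq_iff_eq]; omega
      · have h1 : ¬ ([x, y] <+: a :: c :: t) := fun hp => hcy ((hpre.mp hp).2.symm)
        rw [if_neg h1]
        rw [if_neg hcy] at hc
        by_cases hay : a = y
        · simp only [hay, if_pos, beq_self_eq_true, if_true]; omega
        · simp only [hay, if_neg, if_false, beq_iff_eq]; omega

lemma chain_phi (k i b : ℕ) (hk : 2 ≤ k) (hb1 : 1 ≤ b) (hb2 : b ≤ k - 1) (w : List ℕ) :
    List.Chain' (fun a c => c = b + k * i → a = k * i) (phi k w) := by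
  induction w with
  | nil => simp [phi]; exact List.isChain_nil
  | cons m t ih =>
    unfold List.Chain'
    rw [phi_cons, List.isChain_append]
    refine ⟨?_, ih, ?_⟩
    · unfold phiLetter
      split
      · simp
      · refine List.isChain_pair.mpr ?_
        intro hmy
        have hb' : b - 1 < k := by omega
        have hm : m = (b - 1) + k * i := by omega
        rw [hm, Nat.add_mul_div_left _ _ (by omega : 0 < k),
          Nat.div_eq_of_lt hb', Nat.zero_add]
    · intro a' ha' z hz hzy
      exfalso
      have hz0 : z % k = 0 := head_phi_mod k hk t z hz
      rw [hzy] at hz0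
      have hmod : (b + k * i) % k = b := by
        rw [Nat.add_mul_mod_self_left]
        exact Nat.mod_eq_of_lt (by omega)
      omega

theorem stmt12 (k i b n : ℕ) (hk : 2 ≤ k) (hb1 : 1 ≤ b) (hb2 : b ≤ k - 1) :
    occ [k * i, b + k * i] (W k n) = (W k n).count (b + k * i) := by
  cases n with
  | zero =>
    have hp : ¬ ([k * i, b + k * i] <+: [0]) := by
      intro hp
      have := hp.length_le
      simp at this
    have hne : ¬ ((b + k * i) = 0) := by omega
    simp [W, occ_cons, occ_nil, hp, List.count_cons, hne]
    omega
  | succ n =>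
    have hW : W k (n + 1) = phi k (W k n) := by
      simp [W, Function.iterate_succ_apply']
    rw [hW]
    have h := count_aux (k * i) (b + k * i) (phi k (W k n))
      (chain_phi k i b hk hb1 hb2 (W k n))
    have hhead : ¬ ((phi k (W k n)).head? = some (b + k * i)) := by
      intro hh
      have h0 := head_phi_mod k hk (W k n) _ hh
      rw [Nat.add_mul_mod_self_left] at h0
      have := Nat.mod_eq_of_lt (show b < k by omega)
      omega
    rw [if_neg hhead] at h
    omega
end
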